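/- arXiv:math/9807136 — 2 statements merged into one kernel-verified Lean document; each statement's English description precedes it below -/
import Mathlib

section
/- The function f(y) := (∫₁^∞ dr/(r²(r³+y)))⁻¹ is concave on [0,∞) and satisfies f'(0) = 16/7; consequently f(y) < (16/7)y + 4 for all y > 0. -/
open Real MeasureTheory Set

noncomputable def Jf (k : ℕ) (y : ℝ) : ℝ := ∫ r in Ioi (1 : ℝ), (r ^ 2 * (r ^ 3 + y) ^ k)⁻¹

lemma integrableOn_inv_pow_aux (n : ℕ) (hn : 2 ≤ n) :
    IntegrableOn (fun r : ℝ => (r ^ n)⁻¹) (Ioi 1) := by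
  have h : IntegrableOn (fun r : ℝ => r ^ (-(n : ℝ))) (Ioi 1) :=
    integrableOn_Ioi_rpow_of_lt
      (by norm_num; exact_mod_cast lt_of_lt_of_le one_lt_two (by exact_mod_cast hn)) one_pos
  refine h.congr_fun (fun r hr => ?_) measurableSet_Ioi
  dsimp only; rw [Real.rpow_neg (le_of_lt (lt_trans one_pos hr)), Real.rpow_natCast]

lemma integral_inv_pow_aux (n : ℕ) (hn : 2 ≤ n) :
    ∫ r in Ioi (1 : ℝ), (r ^ n)⁻¹ = ((n : ℝ) - 1)⁻¹ := by
  have h2 : (2:ℝ) ≤ n := by exact_mod_cast hn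
  have hlt : -(n : ℝ) < -1 := by linarith
  rw [setIntegral_congr_fun measurableSet_Ioi (g := fun r : ℝ => r ^ (-(n:ℝ)))
    (fun r hr => by
      show (r ^ n)⁻¹ = r ^ (-(n:ℝ))
      rw [Real.rpow_neg (le_of_lt (lt_trans one_pos hr)), Real.rpow_natCast])]
  rw [integral_Ioi_rpow_of_lt hlt one_pos, Real.one_rpow]
  rw [inv_eq_one_div, div_eq_div_iff (by linarith : (-(n:ℝ)+1) ≠ 0)
    (by linarith : ((n:ℝ) - 1) ≠ 0)]
  ring

lemma denom_facts {r y : ℝ} (hr : 1 < r) (hy : -(1/2) ≤ y) (k : ℕ) :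
    0 < r ^ 2 * (r ^ 3 + y) ^ k ∧ (r ^ 2 * (r ^ 3 + y) ^ k)⁻¹ ≤ 2 ^ k * (r ^ (3 * k + 2))⁻¹ := by
  have hr0 : (0:ℝ) < r := lt_trans one_pos hr
  have h3 : (1:ℝ) ≤ r ^ 3 := one_le_pow₀ hr.le
  have hu : r ^ 3 / 2 ≤ r ^ 3 + y := by nlinarith
  have hup : (0:ℝ) < r ^ 3 / 2 := by positivity
  have h1 : (r ^ 3 / 2) ^ k ≤ (r ^ 3 + y) ^ k := pow_le_pow_left₀ hup.le hu k
  have hpos : 0 < r ^ 2 * (r ^ 3 + y) ^ k := by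
    have : 0 < (r ^ 3 + y) ^ k := lt_of_lt_of_le (pow_pos hup k) h1
    positivity
  refine ⟨hpos, ?_⟩
  have hkey : r ^ (3 * k + 2) / 2 ^ k ≤ r ^ 2 * (r ^ 3 + y) ^ k := by
    calc r ^ (3 * k + 2) / 2 ^ k = r ^ 2 * (r ^ 3 / 2) ^ k := by
          rw [div_pow, ← pow_mul]; ring
      _ ≤ r ^ 2 * (r ^ 3 + y) ^ k := by
          apply mul_le_mul_of_nonneg_left h1 (by positivity)
  have h2 : (0:ℝ) < r ^ (3 * k + 2) / 2 ^ k := by positivity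
  calc (r ^ 2 * (r ^ 3 + y) ^ k)⁻¹ ≤ (r ^ (3 * k + 2) / 2 ^ k)⁻¹ := inv_anti₀ h2 hkey
    _ = 2 ^ k * (r ^ (3 * k + 2))⁻¹ := by rw [inv_div]; ring

lemma g_meas (k : ℕ) (y : ℝ) :
    AEStronglyMeasurable (fun r : ℝ => (r ^ 2 * (r ^ 3 + y) ^ k)⁻¹)
      (volume.restrict (Ioi 1)) := by
  apply Measurable.aestronglyMeasurable
  exact (((measurable_id.pow_const 2).mul
    ((measurable_id.pow_const 3).add_const y |>.pow_const k)).inv)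

lemma g_integrable (k : ℕ) {y : ℝ} (hy : -(1/2) ≤ y) :
    IntegrableOn (fun r : ℝ => (r ^ 2 * (r ^ 3 + y) ^ k)⁻¹) (Ioi 1) := by
  have hb : IntegrableOn (fun r : ℝ => (2:ℝ) ^ k * (r ^ (3 * k + 2))⁻¹) (Ioi 1) :=
    (integrableOn_inv_pow_aux (3 * k + 2) (by omega)).const_mul _
  refine Integrable.mono' hb (g_meas k y) ?_
  filter_upwards [ae_restrict_mem measurableSet_Ioi] with r hr
  have h := denom_facts hr hy k
  rw [Real.norm_eq_abs, abs_of_nonneg (inv_nonneg.2 h.1.le)]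
  exact h.2

lemma Jf_pos (k : ℕ) {y : ℝ} (hy : 0 ≤ y) : 0 < Jf k y := by
  have hlow : IntegrableOn (fun r : ℝ => ((1 + y) ^ k)⁻¹ * (r ^ (3 * k + 2))⁻¹) (Ioi 1) :=
    (integrableOn_inv_pow_aux (3 * k + 2) (by omega)).const_mul _
  have hmono : ((1 + y) ^ k)⁻¹ * ((3 * k + 2 : ℕ) - 1 : ℝ)⁻¹ ≤ Jf k y := by
    rw [show ((1 + y) ^ k)⁻¹ * ((3 * k + 2 : ℕ) - 1 : ℝ)⁻¹
        = ∫ r in Ioi (1:ℝ), ((1 + y) ^ k)⁻¹ * (r ^ (3 * k + 2))⁻¹ by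
      rw [integral_const_mul, integral_inv_pow_aux (3 * k + 2) (by omega)]]
    apply setIntegral_mono_on hlow (g_integrable k (by linarith)) measurableSet_Ioi
    intro r hr
    have hr1 : (1:ℝ) < r := hr
    have hr0 : (0:ℝ) < r := lt_trans one_pos hr1
    have h3 : (1:ℝ) ≤ r ^ 3 := one_le_pow₀ hr1.le
    have hu : r ^ 3 + y ≤ (1 + y) * r ^ 3 := by nlinarith
    have hupos : 0 < r ^ 3 + y := by nlinarith
    have h1 : (r ^ 3 + y) ^ k ≤ ((1 + y) * r ^ 3) ^ k := pow_le_pow_left₀ hupos.le hu k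
    have key : r ^ 2 * (r ^ 3 + y) ^ k ≤ (1 + y) ^ k * r ^ (3 * k + 2) := by
      calc r ^ 2 * (r ^ 3 + y) ^ k ≤ r ^ 2 * ((1 + y) * r ^ 3) ^ k :=
            mul_le_mul_of_nonneg_left h1 (by positivity)
        _ = (1 + y) ^ k * r ^ (3 * k + 2) := by rw [mul_pow, ← pow_mul]; ring
    rw [← mul_inv]
    exact inv_anti₀ (by positivity) key
  have hq : (0:ℝ) < ((1 + y) ^ k)⁻¹ * ((3 * k + 2 : ℕ) - 1 : ℝ)⁻¹ := by
    have h2 : (0:ℝ) < ((3 * k + 2 : ℕ) : ℝ) - 1 := by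
      have : (2:ℝ) ≤ ((3 * k + 2 : ℕ) : ℝ) := by exact_mod_cast (by omega : 2 ≤ 3 * k + 2)
      linarith
    positivity
  linarith

lemma Jf_zero (k : ℕ) : Jf k 0 = ((3 * k + 1 : ℕ) : ℝ)⁻¹ := by
  unfold Jf
  rw [setIntegral_congr_fun measurableSet_Ioi (g := fun r : ℝ => (r ^ (3 * k + 2))⁻¹)
    (fun r hr => by
      show (r ^ 2 * (r ^ 3 + 0) ^ k)⁻¹ = (r ^ (3 * k + 2))⁻¹
      rw [add_zero, ← pow_mul]; ring_nf)]
  rw [integral_inv_pow_aux (3 * k + 2) (by omega)]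
  congr 1
  push_cast; ring

lemma g_hasDerivAt (k : ℕ) {r x : ℝ} (hr : 1 < r) (hx : -(1/2) ≤ x) :
    HasDerivAt (fun x : ℝ => (r ^ 2 * (r ^ 3 + x) ^ (k+1))⁻¹)
      (-((k:ℝ)+1) * (r ^ 2 * (r ^ 3 + x) ^ (k+2))⁻¹) x := by
  have hr0 : (0:ℝ) < r := lt_trans one_pos hr
  have h3 : (1:ℝ) ≤ r ^ 3 := one_le_pow₀ hr.le
  have hu : 0 < r ^ 3 + x := by nlinarith
  have h1 : HasDerivAt (fun x : ℝ => r ^ 3 + x) 1 x := by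
    simpa using (hasDerivAt_id x).const_add (r ^ 3)
  have h2 := (h1.pow (k+1)).const_mul (r ^ 2)
  have hne : r ^ 2 * (r ^ 3 + x) ^ (k+1) ≠ 0 := by positivity
  have h4 := h2.inv hne
  refine h4.congr_deriv ?_
  have hune : r ^ 3 + x ≠ 0 := ne_of_gt hu
  simp only [Pi.pow_apply, Nat.add_sub_cancel, Nat.cast_add, Nat.cast_one]
  field_simp
  ring

lemma ball_subset_half {y : ℝ} (hy : -(1/4) ≤ y) {x : ℝ} (hx : x ∈ Metric.ball y (1/4)) :
    -(1/2) ≤ x := by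
  rw [Metric.mem_ball, Real.dist_eq, abs_sub_lt_iff] at hx
  linarith [hx.2]

lemma hasDerivAt_Jf (k : ℕ) {y : ℝ} (hy : -(1/4) ≤ y) :
    HasDerivAt (Jf (k+1)) (-((k:ℝ)+1) * Jf (k+2) y) y := by
  have hy2 : -(1/2) ≤ y := by linarith
  have key := hasDerivAt_integral_of_dominated_loc_of_deriv_le
    (μ := volume.restrict (Ioi (1:ℝ)))
    (F := fun x r => (r ^ 2 * (r ^ 3 + x) ^ (k+1))⁻¹)
    (F' := fun x r => -((k:ℝ)+1) * (r ^ 2 * (r ^ 3 + x) ^ (k+2))⁻¹)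
    (x₀ := y) (bound := fun r => ((k:ℝ)+1) * (2 ^ (k+2) * (r ^ (3 * (k+2) + 2))⁻¹))
    (s := Metric.ball y (1/4)) (Metric.ball_mem_nhds y (by norm_num))
    (Filter.Eventually.of_forall fun x => g_meas (k+1) x)
    (g_integrable (k+1) hy2)
    (((g_meas (k+2) y).const_mul _))
    ?_ ?_ ?_
  · have h2 : (∫ r in Ioi (1:ℝ), -((k:ℝ)+1) * (r ^ 2 * (r ^ 3 + y) ^ (k+2))⁻¹)
        = -((k:ℝ)+1) * Jf (k+2) y := by
      rw [integral_const_mul]; rfl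
    have := key.2
    rw [h2] at this
    exact this
  · filter_upwards [ae_restrict_mem measurableSet_Ioi] with r hr
    intro x hx
    have hx2 := ball_subset_half hy hx
    have h := denom_facts hr hx2 (k+2)
    rw [norm_mul, Real.norm_eq_abs, Real.norm_eq_abs,
      abs_of_nonneg (inv_nonneg.2 h.1.le),
      abs_of_nonpos (by push_cast; linarith : -((k:ℝ)+1) ≤ 0), neg_neg]
    have hb := h.2
    have hk0 : (0:ℝ) ≤ (k:ℝ)+1 := by positivity
    exact mul_le_mul_of_nonneg_left hb hk0
  · exact ((integrableOn_inv_pow_aux (3*(k+2)+2) (by omega)).const_mul _).const_mul _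
  · filter_upwards [ae_restrict_mem measurableSet_Ioi] with r hr
    intro x hx
    exact g_hasDerivAt k hr (ball_subset_half hy hx)

lemma ptwise_cs (r s t : ℝ) (hr : r ≠ 0) (hs : s ≠ 0) :
    ((r * s)⁻¹ - t * ((r * s)⁻¹ * (s ^ 2)⁻¹)) ^ 2
      = (r ^ 2 * (s ^ 2) ^ 1)⁻¹ - 2 * t * (r ^ 2 * (s ^ 2) ^ 2)⁻¹
        + t ^ 2 * (r ^ 2 * (s ^ 2) ^ 3)⁻¹ := by
  field_simp
  ring

lemma cauchy_schwarz_Jf {y : ℝ} (hy : 0 ≤ y) : (Jf 2 y) ^ 2 ≤ Jf 1 y * Jf 3 y := by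
  have hy2 : -(1/2) ≤ y := by linarith
  have hJ3 := Jf_pos 3 hy
  set t := Jf 2 y / Jf 3 y with htdef
  have i1 := g_integrable 1 hy2
  have i2 := (g_integrable 2 hy2).const_mul (2 * t)
  have i3 := (g_integrable 3 hy2).const_mul (t ^ 2)
  have h0 : 0 ≤ ∫ r in Ioi (1:ℝ),
      ((r * Real.sqrt (r ^ 3 + y))⁻¹ - t * ((r * Real.sqrt (r ^ 3 + y))⁻¹ * (r ^ 3 + y)⁻¹)) ^ 2 :=
    setIntegral_nonneg measurableSet_Ioi (fun r _ => sq_nonneg _)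
  have hcongr : ∫ r in Ioi (1:ℝ),
      ((r * Real.sqrt (r ^ 3 + y))⁻¹ - t * ((r * Real.sqrt (r ^ 3 + y))⁻¹ * (r ^ 3 + y)⁻¹)) ^ 2
      = ∫ r in Ioi (1:ℝ), ((r ^ 2 * (r ^ 3 + y) ^ 1)⁻¹
          - 2 * t * (r ^ 2 * (r ^ 3 + y) ^ 2)⁻¹ + t ^ 2 * (r ^ 2 * (r ^ 3 + y) ^ 3)⁻¹) := by
    apply setIntegral_congr_fun measurableSet_Ioi
    intro r hr
    have hr1 : (1:ℝ) < r := hr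
    have hr0 : (0:ℝ) < r := lt_trans one_pos hr1
    have h3 : (1:ℝ) ≤ r ^ 3 := one_le_pow₀ hr1.le
    have hu : (0:ℝ) < r ^ 3 + y := by nlinarith
    have hs : Real.sqrt (r ^ 3 + y) ^ 2 = r ^ 3 + y := Real.sq_sqrt hu.le
    have hspos : 0 < Real.sqrt (r ^ 3 + y) := Real.sqrt_pos.2 hu
    show ((r * Real.sqrt (r ^ 3 + y))⁻¹ - t * ((r * Real.sqrt (r ^ 3 + y))⁻¹ * (r ^ 3 + y)⁻¹)) ^ 2
      = (r ^ 2 * (r ^ 3 + y) ^ 1)⁻¹ - 2 * t * (r ^ 2 * (r ^ 3 + y) ^ 2)⁻¹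
        + t ^ 2 * (r ^ 2 * (r ^ 3 + y) ^ 3)⁻¹
    have hsne : Real.sqrt (r ^ 3 + y) ≠ 0 := ne_of_gt hspos
    have hrne : r ≠ 0 := ne_of_gt hr0
    have hid := ptwise_cs r (Real.sqrt (r ^ 3 + y)) t hrne hsne
    rw [hs] at hid
    exact hid
  rw [hcongr] at h0
  have i12 : IntegrableOn (fun r : ℝ => (r ^ 2 * (r ^ 3 + y) ^ 1)⁻¹
      - 2 * t * (r ^ 2 * (r ^ 3 + y) ^ 2)⁻¹) (Ioi 1) := i1.sub i2
  have hsplit : ∫ r in Ioi (1:ℝ), ((r ^ 2 * (r ^ 3 + y) ^ 1)⁻¹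
          - 2 * t * (r ^ 2 * (r ^ 3 + y) ^ 2)⁻¹ + t ^ 2 * (r ^ 2 * (r ^ 3 + y) ^ 3)⁻¹)
      = Jf 1 y - 2 * t * Jf 2 y + t ^ 2 * Jf 3 y := by
    rw [integral_add i12 i3, integral_sub i1 i2, integral_const_mul, integral_const_mul]
    rfl
  rw [hsplit] at h0
  have ht : t * Jf 3 y = Jf 2 y := div_mul_cancel₀ _ (ne_of_gt hJ3)
  have e1 : t ^ 2 * Jf 3 y = t * Jf 2 y := by rw [pow_two, mul_assoc, ht]
  have e2 : t * Jf 2 y ≤ Jf 1 y := by linarith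
  calc (Jf 2 y) ^ 2 = (t * Jf 2 y) * Jf 3 y := by rw [← ht]; ring
    _ ≤ Jf 1 y * Jf 3 y := mul_le_mul_of_nonneg_right e2 hJ3.le

lemma Jf_lower {w : ℝ} (hw : 0 ≤ w) :
    1/4 - w/7 + w^2/10 - w^3/13 ≤ Jf 1 w := by
  have i5 := integrableOn_inv_pow_aux 5 (by norm_num)
  have i8 := (integrableOn_inv_pow_aux 8 (by norm_num)).const_mul w
  have i11 := (integrableOn_inv_pow_aux 11 (by norm_num)).const_mul (w^2)
  have i14 := (integrableOn_inv_pow_aux 14 (by norm_num)).const_mul (w^3)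
  have i58 : IntegrableOn (fun r : ℝ => (r^5)⁻¹ - w*(r^8)⁻¹) (Ioi 1) := i5.sub i8
  have i5811 : IntegrableOn (fun r : ℝ => (r^5)⁻¹ - w*(r^8)⁻¹ + w^2*(r^11)⁻¹) (Ioi 1) :=
    i58.add i11
  have ilow : IntegrableOn
      (fun r : ℝ => (r^5)⁻¹ - w*(r^8)⁻¹ + w^2*(r^11)⁻¹ - w^3*(r^14)⁻¹) (Ioi 1) := i5811.sub i14
  have hval : ∫ r in Ioi (1:ℝ), ((r^5)⁻¹ - w*(r^8)⁻¹ + w^2*(r^11)⁻¹ - w^3*(r^14)⁻¹)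
      = 1/4 - w/7 + w^2/10 - w^3/13 := by
    rw [integral_sub i5811 i14, integral_add i58 i11, integral_sub i5 i8,
      integral_const_mul, integral_const_mul, integral_const_mul,
      integral_inv_pow_aux 5 (by norm_num), integral_inv_pow_aux 8 (by norm_num),
      integral_inv_pow_aux 11 (by norm_num), integral_inv_pow_aux 14 (by norm_num)]
    norm_num
    ring
  rw [← hval]
  apply setIntegral_mono_on ilow (by simpa using g_integrable 1 (by linarith)) measurableSet_Ioi
  intro r hr
  have hr1 : (1:ℝ) < r := hr
  have hr0 : (0:ℝ) < r := lt_trans one_pos hr1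
  have h3 : (1:ℝ) ≤ r ^ 3 := one_le_pow₀ hr1.le
  have hu : (0:ℝ) < r ^ 3 + w := by nlinarith
  have key : (r ^ 2 * (r ^ 3 + w) ^ 1)⁻¹ - ((r^5)⁻¹ - w*(r^8)⁻¹ + w^2*(r^11)⁻¹ - w^3*(r^14)⁻¹)
      = w^4 / (r^14 * (r^3 + w)) := by
    rw [pow_one]
    field_simp
    ring
  have hpos : 0 ≤ w^4 / (r^14 * (r^3 + w)) := by positivity
  linarith [key ▸ hpos]

/-- The function `f(y) = (∫₁^∞ dr/(r²(r³+y)))⁻¹` is concave on `[0,∞)`,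
has right derivative `16/7` at `0`, and satisfies `f(y) < (16/7)y + 4`
for all `y > 0`. -/
theorem f_concave_deriv_bound
    (f : ℝ → ℝ)
    (hf : ∀ y : ℝ, 0 ≤ y →
      f y = (∫ r in Set.Ioi (1 : ℝ), (r ^ 2 * (r ^ 3 + y))⁻¹)⁻¹) :
    ConcaveOn ℝ (Set.Ici 0) f ∧
    HasDerivWithinAt f (16 / 7) (Set.Ici 0) 0 ∧
    ∀ y : ℝ, 0 < y → f y < 16 / 7 * y + 4 := by
  -- f agrees with F := (Jf 1 ·)⁻¹ on [0,∞)
  have f_eq : ∀ y : ℝ, 0 ≤ y → f y = (Jf 1 y)⁻¹ := by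
    intro y hy
    rw [hf y hy]
    congr 1
    unfold Jf
    simp only [pow_one]
  -- derivatives of Jf
  have hJ1' : ∀ y : ℝ, 0 ≤ y → HasDerivAt (Jf 1) (-(1:ℝ) * Jf 2 y) y := by
    intro y hy
    have := hasDerivAt_Jf 0 (by linarith : -(1/4) ≤ y)
    norm_num at this
    simpa using this
  have hJ2' : ∀ y : ℝ, 0 ≤ y → HasDerivAt (Jf 2) (-(2:ℝ) * Jf 3 y) y := by
    intro y hy
    have := hasDerivAt_Jf 1 (by linarith : -(1/4) ≤ y)
    norm_num at this
    simpa using this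
  have hF : ∀ y : ℝ, 0 ≤ y →
      HasDerivAt (fun y => (Jf 1 y)⁻¹) (Jf 2 y / (Jf 1 y) ^ 2) y := by
    intro y hy
    have h := (hJ1' y hy).inv (ne_of_gt (Jf_pos 1 hy))
    refine h.congr_deriv ?_
    field_simp
  have hF' : ∀ y : ℝ, 0 ≤ y →
      HasDerivAt (fun y => Jf 2 y / (Jf 1 y) ^ 2)
        ((2 * (Jf 2 y) ^ 2 - 2 * Jf 1 y * Jf 3 y) / (Jf 1 y) ^ 3) y := by
    intro y hy
    have hJ1pos := Jf_pos 1 hy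
    have h := (hJ2' y hy).div ((hJ1' y hy).pow 2) (pow_ne_zero 2 (ne_of_gt hJ1pos))
    refine h.congr_deriv ?_
    have hne : Jf 1 y ≠ 0 := ne_of_gt hJ1pos
    simp only [Pi.pow_apply]
    field_simp
    ring
  -- concavity
  have hconc : ConcaveOn ℝ (Ici 0) f := by
    apply concaveOn_of_hasDerivWithinAt2_nonpos (convex_Ici 0)
      (f' := fun y => Jf 2 y / (Jf 1 y) ^ 2)
      (f'' := fun y => (2 * (Jf 2 y) ^ 2 - 2 * Jf 1 y * Jf 3 y) / (Jf 1 y) ^ 3)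
    · have hFc : ContinuousOn (fun y => (Jf 1 y)⁻¹) (Ici 0) :=
        fun y hy => ((hF y hy).continuousAt).continuousWithinAt
      exact hFc.congr f_eq
    · intro x hx
      rw [interior_Ici] at hx ⊢
      refine ((hF x (le_of_lt hx)).hasDerivWithinAt).congr ?_ ?_
      · intro z hz; exact f_eq z (le_of_lt hz)
      · exact f_eq x (le_of_lt hx)
    · intro x hx
      rw [interior_Ici] at hx ⊢
      exact ((hF' x (le_of_lt hx)).hasDerivWithinAt)
    · intro x hx
      rw [interior_Ici] at hx
      have hcs := cauchy_schwarz_Jf (le_of_lt hx)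
      have hJ1pos := Jf_pos 1 (le_of_lt hx)
      apply div_nonpos_of_nonpos_of_nonneg
      · nlinarith
      · positivity
  -- values at 0
  have hJ10 : Jf 1 0 = (4:ℝ)⁻¹ := by rw [Jf_zero]; norm_num
  have hJ20 : Jf 2 0 = (7:ℝ)⁻¹ := by rw [Jf_zero]; norm_num
  have hf0 : f 0 = 4 := by rw [f_eq 0 le_rfl, hJ10]; norm_num
  -- derivative within at 0
  have hderiv : HasDerivWithinAt f (16 / 7) (Set.Ici 0) 0 := by
    have h := (hF 0 le_rfl).hasDerivWithinAt (s := Ici 0)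
    have hval : Jf 2 0 / (Jf 1 0) ^ 2 = 16 / 7 := by rw [hJ10, hJ20]; norm_num
    rw [hval] at h
    exact h.congr (fun z hz => f_eq z hz) (f_eq 0 le_rfl)
  refine ⟨hconc, hderiv, ?_⟩
  -- the strict bound
  have hsmall : ∀ w : ℝ, 0 < w → w ≤ 3/10 → f w < 16 / 7 * w + 4 := by
    intro w hw hw3
    have hJ := Jf_lower hw.le
    have hP : 7 / (28 + 16 * w) < 1/4 - w/7 + w^2/10 - w^3/13 := by
      rw [div_lt_iff₀ (by linarith : (0:ℝ) < 28 + 16 * w)]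
      nlinarith [mul_pos hw hw, mul_pos (mul_pos hw hw) hw,
        mul_pos (mul_pos (mul_pos hw hw) hw) hw]
    have hQpos : (0:ℝ) < 7 / (28 + 16 * w) := by positivity
    have hJw : 7 / (28 + 16 * w) < Jf 1 w := lt_of_lt_of_le hP hJ
    have hinv : (Jf 1 w)⁻¹ < (7 / (28 + 16 * w))⁻¹ := by
      exact inv_strictAnti₀ hQpos hJw
    rw [f_eq w hw.le]
    have : (7 / (28 + 16 * w))⁻¹ = (28 + 16 * w) / 7 := by rw [inv_div]
    rw [this] at hinv
    linarith
  intro y hy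
  by_cases hy3 : y ≤ 3/10
  · exact hsmall y hy hy3
  · push_neg at hy3
    set b : ℝ := (3/10) / y with hbdef
    have hypos : (0:ℝ) < y := hy
    have hb0 : 0 < b := by positivity
    have hb1 : b < 1 := by
      rw [hbdef, div_lt_one hypos]; linarith
    have hby : b * y = 3/10 := div_mul_cancel₀ _ (ne_of_gt hypos)
    have hcc := hconc.2 (self_mem_Ici (a := (0:ℝ))) (mem_Ici.2 hy.le)
      (by linarith : (0:ℝ) ≤ 1 - b) hb0.le (by ring)
    simp only [smul_eq_mul, mul_zero, zero_add] at hcc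
    rw [hby] at hcc
    have hs := hsmall (3/10) (by norm_num) le_rfl
    -- hcc : (1-b) * f 0 + b * f y ≤ f (3/10)
    rw [hf0] at hcc
    have hby' : b * y = 3/10 := hby
    nlinarith [hcc, hs, hb0, mul_pos hb0 hypos]
end

section
/- If y satisfies y'' + ω²y = G with y(0)=0, α𝓔 ≤ G(t) ≤ β𝓔 for constants 0 < α ≤ β and 𝓔 > 0, and |y'(0)| ≤ K√(n̄)𝓔, then there exist T₀ > 0 and C > 0 depending only on α, β, ω, K, n̄ (not on 𝓔 ≥ 1) such that y''(t) = Q'(t) ≥ C𝓔 for 0 ≤ t ≤ T₀. -/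
open Real

set_option maxHeartbeats 1000000 in
/-- If `y'' + ω²y = G` with `y(0) = 0`, `α𝓔 ≤ G(t) ≤ β𝓔` with `0 < α ≤ β`
and `𝓔 ≥ 1`, and `|y'(0)| ≤ K√n̄·𝓔`, then there exist `T₀ > 0` and `C > 0`
depending only on `α, β, ω, K, n̄` such that `y''(t) ≥ C𝓔` for
`0 ≤ t ≤ T₀` (within the interval of existence). -/
theorem oscillator_lower_bound
    (ω nb K α β : ℝ) (hω : 0 < ω) (hn : 0 < nb) (hK : 0 < K)
    (hα : 0 < α) (hαβ : α ≤ β) :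
    ∃ T0 > 0, ∃ C > 0,
      ∀ (𝓔 : ℝ), 1 ≤ 𝓔 →
      ∀ (T : ℝ), 0 < T →
      ∀ y G : ℝ → ℝ,
        ContDiffOn ℝ 2 y (Set.Ico 0 T) →
        y 0 = 0 →
        (∀ t ∈ Set.Ico (0:ℝ) T, deriv (deriv y) t + ω ^ 2 * y t = G t) →
        (∀ t ∈ Set.Ico (0:ℝ) T, α * 𝓔 ≤ G t ∧ G t ≤ β * 𝓔) →
        |deriv y 0| ≤ K * Real.sqrt nb * 𝓔 →
        ∀ t : ℝ, 0 ≤ t → t ≤ T0 → t < T →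
          C * 𝓔 ≤ deriv (deriv y) t := by
  have hβ : 0 < β := lt_of_lt_of_le hα hαβ
  set A0 : ℝ := K * Real.sqrt nb with hA0
  have hA0pos : 0 < A0 := mul_pos hK (Real.sqrt_pos.mpr hn)
  refine ⟨min (min (α / (6 * ω^2 * A0)) (α / (6 * ω^2 * β))) (min (α/(6*ω*β)) 1),
    by positivity, α/2, by positivity, ?_⟩
  intro E hE T hT y G hy hy0 hode hG hd0 t ht0 htT0 htT
  have hEpos : (0:ℝ) < E := lt_of_lt_of_le one_pos hE
  have h0s : (0:ℝ) ∈ Set.Ico (0:ℝ) T := ⟨le_refl 0, hT⟩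
  have hG0 := (hG 0 h0s).1
  have hode0 := hode 0 h0s
  rw [hy0, mul_zero, add_zero] at hode0
  rcases eq_or_lt_of_le ht0 with rfl | htpos
  · rw [hode0]; nlinarith
  -- main case 0 < t
  have husd : UniqueDiffOn ℝ (Set.Ico (0:ℝ) T) := uniqueDiffOn_Ico 0 T
  have h2 : ContDiffOn ℝ ((1:ℕ)+1) y (Set.Ico (0:ℝ) T) := by exact_mod_cast hy
  rw [contDiffOn_succ_iff_derivWithin husd] at h2
  obtain ⟨hydiff, -, hg1⟩ := h2
  set g := derivWithin y (Set.Ico (0:ℝ) T) with hgdef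
  have hgcont : ContinuousOn g (Set.Ico (0:ℝ) T) := hg1.continuousOn
  have hgdiff : DifferentiableOn ℝ g (Set.Ico (0:ℝ) T) := hg1.differentiableOn (by norm_num)
  have hg1' : ContDiffOn ℝ ((0:ℕ)+1) g (Set.Ico (0:ℝ) T) := by exact_mod_cast hg1
  rw [contDiffOn_succ_iff_derivWithin husd] at hg1'
  set g2 := derivWithin g (Set.Ico (0:ℝ) T) with hg2def
  have hg2cont : ContinuousOn g2 (Set.Ico (0:ℝ) T) := hg1'.2.2.continuousOn
  have hycont : ContinuousOn y (Set.Ico (0:ℝ) T) := hy.continuousOn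
  -- full derivatives at interior points
  have hydx : ∀ x ∈ Set.Ioo (0:ℝ) T, HasDerivAt y (g x) x := by
    intro x hx
    exact ((hydiff x (Set.Ioo_subset_Ico_self hx)).hasDerivWithinAt).hasDerivAt
      (Ico_mem_nhds hx.1 hx.2)
  have hgdx : ∀ x ∈ Set.Ioo (0:ℝ) T, HasDerivAt g (g2 x) x := by
    intro x hx
    exact ((hgdiff x (Set.Ioo_subset_Ico_self hx)).hasDerivWithinAt).hasDerivAt
      (Ico_mem_nhds hx.1 hx.2)
  have hderiv_eq : ∀ x ∈ Set.Ioo (0:ℝ) T, deriv y x = g x := fun x hx => (hydx x hx).deriv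
  have hd2 : ∀ x ∈ Set.Ioo (0:ℝ) T, deriv (deriv y) x = g2 x := by
    intro x hx
    have hev : deriv y =ᶠ[nhds x] g := by
      filter_upwards [Ioo_mem_nhds hx.1 hx.2] with z hz using hderiv_eq z hz
    rw [hev.deriv_eq]
    exact (hgdx x hx).deriv
  have hode2 : ∀ x ∈ Set.Ioo (0:ℝ) T, g2 x = G x - ω^2 * y x := by
    intro x hx
    have h := hode x (Set.Ioo_subset_Ico_self hx)
    rw [hd2 x hx] at h
    linarith
  -- deriv y is differentiable at 0 (else the ODE at 0 fails)
  have hf0diff : DifferentiableAt ℝ (deriv y) 0 := by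
    by_contra h
    rw [deriv_zero_of_not_differentiableAt h] at hode0
    nlinarith
  -- deriv y 0 = g 0
  have hfg0 : deriv y 0 = g 0 := by
    have hne : (nhdsWithin (0:ℝ) (Set.Ioo 0 T)).NeBot := by
      rw [← mem_closure_iff_nhdsWithin_neBot, closure_Ioo (ne_of_lt hT)]
      exact ⟨le_refl 0, le_of_lt hT⟩
    have h1 : Filter.Tendsto (deriv y) (nhdsWithin (0:ℝ) (Set.Ioo 0 T)) (nhds (deriv y 0)) :=
      (hf0diff.continuousAt.tendsto).mono_left nhdsWithin_le_nhds
    have h2 : Filter.Tendsto g (nhdsWithin (0:ℝ) (Set.Ioo 0 T)) (nhds (g 0)) :=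
      ((hgcont 0 h0s).tendsto).mono_left (nhdsWithin_mono 0 Set.Ioo_subset_Ico_self)
    have h1' : Filter.Tendsto g (nhdsWithin (0:ℝ) (Set.Ioo 0 T)) (nhds (deriv y 0)) := by
      apply h1.congr'
      filter_upwards [self_mem_nhdsWithin] with z hz using (hderiv_eq z hz)
    exact tendsto_nhds_unique h1' h2
  have hg0le : |g 0| ≤ A0 * E := by rw [← hfg0]; exact hd0
  -- G = g2 + ω² y on Ico 0 T
  have hfgOn : Set.EqOn (deriv y) g (Set.Ico (0:ℝ) T) := by
    intro z hz
    rcases eq_or_lt_of_le hz.1 with h | h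
    · rw [← h]; exact hfg0
    · exact hderiv_eq z ⟨h, hz.2⟩
  have hd20 : deriv (deriv y) 0 = g2 0 := by
    have e1 : derivWithin (deriv y) (Set.Ico (0:ℝ) T) 0 = derivWithin g (Set.Ico (0:ℝ) T) 0 :=
      derivWithin_congr hfgOn hfg0
    have e2 : derivWithin (deriv y) (Set.Ico (0:ℝ) T) 0 = deriv (deriv y) 0 :=
      hf0diff.derivWithin (husd 0 h0s)
    rw [← e2, e1]
  have hGeq : ∀ x ∈ Set.Ico (0:ℝ) T, G x = g2 x + ω^2 * y x := by
    intro x hx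
    rcases eq_or_lt_of_le hx.1 with h | h
    · rw [← h, hy0, mul_zero, add_zero, ← hd20, hode0]
    · have := hode2 x ⟨h, hx.2⟩; linarith
  -- setup for FTC on [0, t]
  have hsub : Set.Icc (0:ℝ) t ⊆ Set.Ico (0:ℝ) T :=
    fun z hz => ⟨hz.1, lt_of_le_of_lt hz.2 htT⟩
  have hccos : Continuous fun τ : ℝ => Real.cos (ω*τ) :=
    Real.continuous_cos.comp (continuous_const.mul continuous_id)
  have hcsin : Continuous fun τ : ℝ => Real.sin (ω*τ) :=
    Real.continuous_sin.comp (continuous_const.mul continuous_id)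
  have hGcont : ContinuousOn G (Set.Icc (0:ℝ) t) := by
    apply ContinuousOn.congr (((hg2cont.mono hsub).add
      ((continuousOn_const (c := ω^2)).mul (hycont.mono hsub))))
    intro z hz
    exact hGeq z (hsub hz)
  have hintcos : IntervalIntegrable (fun τ => G τ * Real.cos (ω*τ))
      MeasureTheory.volume 0 t := by
    apply ContinuousOn.intervalIntegrable
    rw [Set.uIcc_of_le ht0]
    exact hGcont.mul hccos.continuousOn
  have hintsin : IntervalIntegrable (fun τ => -(G τ * Real.sin (ω*τ)))
      MeasureTheory.volume 0 t := by
    apply ContinuousOn.intervalIntegrable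
    rw [Set.uIcc_of_le ht0]
    exact (hGcont.mul hcsin.continuousOn).neg
  have hIoosub : Set.Ioo (0:ℝ) t ⊆ Set.Ioo (0:ℝ) T :=
    Set.Ioo_subset_Ioo_right (le_of_lt htT)
  have hyc : ContinuousOn y (Set.Icc 0 t) := hycont.mono hsub
  have hgc : ContinuousOn g (Set.Icc 0 t) := hgcont.mono hsub
  -- FTC for p
  have hFTC1 : (∫ τ in (0:ℝ)..t, G τ * Real.cos (ω*τ))
      = (ω * y t * Real.sin (ω*t) + g t * Real.cos (ω*t))
        - (ω * y 0 * Real.sin (ω*0) + g 0 * Real.cos (ω*0)) := by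
    apply intervalIntegral.integral_eq_sub_of_hasDeriv_right_of_le ht0 ?_ ?_ hintcos
    · exact ((continuousOn_const.mul hyc).mul hcsin.continuousOn).add
        (hgc.mul hccos.continuousOn)
    · intro x hx
      have hx' := hIoosub hx
      have h1 := hydx x hx'
      have h2 : HasDerivAt g (G x - ω^2 * y x) x := (hode2 x hx') ▸ hgdx x hx'
      have hlin : HasDerivAt (fun τ : ℝ => ω*τ) ω x := by
        simpa using (hasDerivAt_id x).const_mul ω
      have hP := ((h1.const_mul ω).mul hlin.sin).add (h2.mul hlin.cos)
      apply HasDerivAt.hasDerivWithinAt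
      convert hP using 1
      · ext τ; simp only [Pi.add_apply, Pi.sub_apply, Pi.mul_apply]
      ring
  -- FTC for q
  have hFTC2 : (∫ τ in (0:ℝ)..t, -(G τ * Real.sin (ω*τ)))
      = (ω * y t * Real.cos (ω*t) - g t * Real.sin (ω*t))
        - (ω * y 0 * Real.cos (ω*0) - g 0 * Real.sin (ω*0)) := by
    apply intervalIntegral.integral_eq_sub_of_hasDeriv_right_of_le ht0 ?_ ?_ hintsin
    · exact ((continuousOn_const.mul hyc).mul hccos.continuousOn).sub
        (hgc.mul hcsin.continuousOn)
    · intro x hx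
      have hx' := hIoosub hx
      have h1 := hydx x hx'
      have h2 : HasDerivAt g (G x - ω^2 * y x) x := (hode2 x hx') ▸ hgdx x hx'
      have hlin : HasDerivAt (fun τ : ℝ => ω*τ) ω x := by
        simpa using (hasDerivAt_id x).const_mul ω
      have hP := ((h1.const_mul ω).mul hlin.cos).sub (h2.mul hlin.sin)
      apply HasDerivAt.hasDerivWithinAt
      convert hP using 1
      · ext τ; simp only [Pi.add_apply, Pi.sub_apply, Pi.mul_apply]
      ring
  set I1 := ∫ τ in (0:ℝ)..t, G τ * Real.cos (ω*τ) with hI1def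
  set I2 := ∫ τ in (0:ℝ)..t, -(G τ * Real.sin (ω*τ)) with hI2def
  have hpt : ω * y t * Real.sin (ω*t) + g t * Real.cos (ω*t) = g 0 + I1 := by
    rw [hFTC1, hy0]
    simp
  have hqt : ω * y t * Real.cos (ω*t) - g t * Real.sin (ω*t) = I2 := by
    rw [hFTC2, hy0]
    simp
  have hsc := Real.sin_sq_add_cos_sq (ω*t)
  have hident : ω * y t = (g 0 + I1) * Real.sin (ω*t) + I2 * Real.cos (ω*t) := by
    linear_combination Real.sin (ω*t) * hpt + Real.cos (ω*t) * hqt - ω * y t * hsc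
  -- integral bounds
  have hGbound : ∀ x ∈ Set.uIoc (0:ℝ) t, |G x| ≤ β * E := by
    intro x hx
    rw [Set.uIoc_of_le ht0] at hx
    have hxs : x ∈ Set.Ico (0:ℝ) T := ⟨le_of_lt hx.1, lt_of_le_of_lt hx.2 htT⟩
    have hGx := hG x hxs
    refine abs_le.mpr ⟨?_, hGx.2⟩
    nlinarith [hGx.1]
  have hI1b : |I1| ≤ β*E*t := by
    have h := intervalIntegral.norm_integral_le_of_norm_le_const (C := β*E)
      (f := fun τ => G τ * Real.cos (ω*τ)) (a := (0:ℝ)) (b := t) ?_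
    · rw [hI1def]
      simpa [abs_of_nonneg ht0, mul_assoc] using h
    · intro x hx
      have := hGbound x hx
      calc ‖G x * Real.cos (ω*x)‖ = |G x| * |Real.cos (ω*x)| := abs_mul _ _
        _ ≤ (β*E) * 1 := by
            apply mul_le_mul this (Real.abs_cos_le_one _) (abs_nonneg _) (by positivity)
        _ = β*E := mul_one _
  have hI2b : |I2| ≤ β*E*t := by
    have h := intervalIntegral.norm_integral_le_of_norm_le_const (C := β*E)
      (f := fun τ => -(G τ * Real.sin (ω*τ))) (a := (0:ℝ)) (b := t) ?_
    · rw [hI2def]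
      simpa [abs_of_nonneg ht0, mul_assoc] using h
    · intro x hx
      have := hGbound x hx
      calc ‖-(G x * Real.sin (ω*x))‖ = |G x| * |Real.sin (ω*x)| := by
            rw [norm_neg]; exact abs_mul _ _
        _ ≤ (β*E) * 1 := by
            apply mul_le_mul this (Real.abs_sin_le_one _) (abs_nonneg _) (by positivity)
        _ = β*E := mul_one _
  -- bound on |ω y t|
  have hsinb : |Real.sin (ω*t)| ≤ ω*t := by
    have h := Real.abs_sin_le_abs (x := ω*t)
    rwa [abs_of_nonneg (mul_nonneg hω.le ht0)] at h
  have habs : |ω * y t| ≤ (ω*t) * (A0*E + β*E*t) + β*E*t := by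
    rw [hident]
    calc |(g 0 + I1) * Real.sin (ω*t) + I2 * Real.cos (ω*t)|
        ≤ |(g 0 + I1)| * |Real.sin (ω*t)| + |I2| * |Real.cos (ω*t)| := by
          refine (abs_add_le _ _).trans ?_
          rw [abs_mul, abs_mul]
      _ ≤ (A0*E + β*E*t) * (ω*t) + (β*E*t) * 1 := by
          apply add_le_add
          · apply mul_le_mul _ hsinb (abs_nonneg _) (by positivity)
            exact (abs_add_le _ _).trans (add_le_add hg0le hI1b)
          · exact mul_le_mul hI2b (Real.abs_cos_le_one _) (abs_nonneg _) (by positivity)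
      _ = (ω*t) * (A0*E + β*E*t) + β*E*t := by ring
  -- arithmetic with T0 bounds
  have htA : t ≤ α / (6 * ω^2 * A0) :=
    le_trans htT0 (le_trans (min_le_left _ _) (min_le_left _ _))
  have htB : t ≤ α / (6 * ω^2 * β) :=
    le_trans htT0 (le_trans (min_le_left _ _) (min_le_right _ _))
  have htC : t ≤ α / (6*ω*β) :=
    le_trans htT0 (le_trans (min_le_right _ _) (min_le_left _ _))
  have ht1 : t ≤ 1 := le_trans htT0 (le_trans (min_le_right _ _) (min_le_right _ _))
  have e1 : ω^2 * A0 * t ≤ α/6 := by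
    rw [le_div_iff₀ (by positivity)] at htA; linarith
  have e2 : ω^2 * β * t ≤ α/6 := by
    rw [le_div_iff₀ (by positivity)] at htB; linarith
  have e3 : ω * β * t ≤ α/6 := by
    rw [le_div_iff₀ (by positivity)] at htC; linarith
  have e4 : t^2 ≤ t := by nlinarith
  -- conclude
  have hωy : ω * y t ≤ (ω*t) * (A0*E + β*E*t) + β*E*t := (le_abs_self _).trans habs
  have hωy2 : ω * (ω * y t) ≤ ω * ((ω*t) * (A0*E + β*E*t) + β*E*t) :=
    mul_le_mul_of_nonneg_left hωy hω.le
  have hy2 : ω^2 * y t ≤ ω^2*A0*t*E + ω^2*β*t^2*E + ω*β*t*E := by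
    have hr : ω * ((ω*t) * (A0*E + β*E*t) + β*E*t)
        = ω^2*A0*t*E + ω^2*β*t^2*E + ω*β*t*E := by ring
    have hl : ω^2 * y t = ω * (ω * y t) := by ring
    linarith
  have f1 : ω^2*A0*t*E ≤ α/6*E := mul_le_mul_of_nonneg_right e1 hEpos.le
  have f2 : ω^2*β*t^2*E ≤ α/6*E := by
    have h21 : ω^2*β*t^2 ≤ ω^2*β*t :=
      mul_le_mul_of_nonneg_left e4 (by positivity)
    exact mul_le_mul_of_nonneg_right (le_trans h21 e2) hEpos.le
  have f3 : ω*β*t*E ≤ α/6*E := mul_le_mul_of_nonneg_right e3 hEpos.le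
  have hfinal : ω^2 * y t ≤ α/2 * E := by linarith
  have hGt := hG t ⟨ht0, htT⟩
  rw [hd2 t ⟨htpos, htT⟩, hode2 t ⟨htpos, htT⟩]
  linarith [hGt.1]
end
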